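/- Let P be a homogeneous polynomial of degree d in n variables with real coefficients. Then the squared distance of P to the set of real rank-1 symmetric tensors satisfies dist_1(P)^2 := min_{(w,v) ∈ ℝ × S^{n−1}} ‖P − w(v^t x)^d‖_d^2 = ‖P‖_d^2 − (max_{v ∈ S^{n−1}} |P(v)|)^2. Moreover, if v* ∈ S^{n−1} is a global maximizer of |P(v)| on S^{n−1} and w = P(v*), then w((v*)^t x)^d attains this minimum, i.e., it is a best real rank-1 approximation of P. -/

import Mathlib

noncomputable section

/-- The real apolar product `⟨P,Q⟩ = Σ_α P_α Q_α / C(d,α)`. -/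
def apolarR {n : ℕ} (P Q : MvPolynomial (Fin n) ℝ) : ℝ :=
  ∑ α ∈ P.support ∪ Q.support,
    P.coeff α * Q.coeff α / (Finsupp.multinomial α : ℝ)

/-- `(vᵗx)^d`, the `d`-th power of the real linear form with coefficient vector `v`. -/
def linPowR {n : ℕ} (v : Fin n → ℝ) (d : ℕ) : MvPolynomial (Fin n) ℝ :=
  (∑ i, MvPolynomial.C (v i) * MvPolynomial.X i) ^ d

open MvPolynomial Finset in
lemma apolarR_eq_sum {n : ℕ} {P Q : MvPolynomial (Fin n) ℝ} {S : Finset ((Fin n) →₀ ℕ)}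
    (h : P.support ∪ Q.support ⊆ S) :
    apolarR P Q = ∑ α ∈ S, P.coeff α * Q.coeff α / (Finsupp.multinomial α : ℝ) := by
  refine Finset.sum_subset h fun α _ hα => ?_
  rcases Finset.notMem_union.1 hα with ⟨h1, _⟩
  rw [MvPolynomial.notMem_support_iff.1 h1, zero_mul, zero_div]

open MvPolynomial Finset in
lemma coeff_linPowR {n d : ℕ} (v : Fin n → ℝ) (α : (Fin n) →₀ ℕ) :
    (linPowR v d).coeff α =
      if (∑ i, α i) = d then (Finsupp.multinomial α : ℝ) * ∏ i, v i ^ α i else 0 := by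
  classical
  rw [linPowR, Finset.sum_pow_eq_sum_piAntidiag, MvPolynomial.coeff_sum]
  have hterm : ∀ k : Fin n → ℕ,
      ((Nat.multinomial Finset.univ k : MvPolynomial (Fin n) ℝ) *
        ∏ i, (MvPolynomial.C (v i) * MvPolynomial.X i) ^ k i) =
      MvPolynomial.C ((Nat.multinomial Finset.univ k : ℝ) * ∏ i, v i ^ k i) *
        ∏ i, (MvPolynomial.X i : MvPolynomial (Fin n) ℝ) ^ k i := by
    intro k
    simp only [mul_pow, Finset.prod_mul_distrib, ← MvPolynomial.C_pow, ← map_prod, map_mul,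
      MvPolynomial.C_eq_coe_nat]
    ring
  have hmono : ∀ k : Fin n → ℕ,
      (∏ i, (MvPolynomial.X i : MvPolynomial (Fin n) ℝ) ^ k i) =
        MvPolynomial.monomial (Finsupp.equivFunOnFinite.symm k) 1 := by
    intro k
    rw [← MvPolynomial.prod_X_pow_eq_monomial]
    rw [← Finset.prod_subset (Finset.subset_univ (Finsupp.equivFunOnFinite.symm k).support)]
    · rfl
    · intro i _ hi
      have hk : k i = 0 := Finsupp.notMem_support_iff.1 hi
      rw [hk, pow_zero]
  have key : ∀ k ∈ Finset.piAntidiag Finset.univ d,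
      MvPolynomial.coeff α ((Nat.multinomial Finset.univ k : MvPolynomial (Fin n) ℝ) *
        ∏ i, (MvPolynomial.C (v i) * MvPolynomial.X i) ^ k i) =
      if k = ⇑α then (Nat.multinomial Finset.univ k : ℝ) * ∏ i, v i ^ k i else 0 := by
    intro k _
    rw [hterm, hmono, MvPolynomial.coeff_C_mul, MvPolynomial.coeff_monomial]
    have : (Finsupp.equivFunOnFinite.symm k = α) ↔ (k = ⇑α) := by
      constructor
      · intro h; rw [← h]; rfl
      · intro h; apply Finsupp.equivFunOnFinite.injective; simp [h]
    by_cases h : k = ⇑α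
    · rw [if_pos (this.2 h), if_pos h, mul_one]
    · rw [if_neg (fun hh => h (this.1 hh)), if_neg h, mul_zero]
  rw [Finset.sum_congr rfl key, Finset.sum_ite_eq' (Finset.piAntidiag Finset.univ d) (⇑α)]
  have hmem : (⇑α ∈ Finset.piAntidiag Finset.univ d) ↔ (∑ i, α i) = d := by
    rw [Finset.mem_piAntidiag]
    exact ⟨fun h => h.1, fun h => ⟨h, fun i _ => Finset.mem_univ i⟩⟩
  have hmul : Nat.multinomial Finset.univ ⇑α = Finsupp.multinomial α := by
    rw [Finsupp.multinomial_eq]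
    unfold Nat.multinomial
    congr 1
    · congr 1
      exact (Finset.sum_subset (Finset.subset_univ _)
        (fun i _ hi => Finsupp.notMem_support_iff.1 hi)).symm
    · exact (Finset.prod_subset (Finset.subset_univ _)
        (fun i _ hi => by rw [Finsupp.notMem_support_iff.1 hi]; rfl)).symm
  by_cases h : (∑ i, α i) = d
  · rw [if_pos (hmem.2 h), if_pos h, hmul]
  · rw [if_neg (fun hh => h (hmem.1 hh)), if_neg h]

lemma degree_eq_sum_univ {n : ℕ} (α : (Fin n) →₀ ℕ) : α.degree = ∑ i, α i :=
  Finset.sum_subset (Finset.subset_univ _) (fun i _ hi => Finsupp.notMem_support_iff.1 hi)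

lemma multinomialR_pos {n : ℕ} (α : (Fin n) →₀ ℕ) : (0:ℝ) < (Finsupp.multinomial α : ℝ) := by
  exact_mod_cast Nat.multinomial_pos _ _

open MvPolynomial in
/-- Reproducing property of the apolar product. -/
lemma apolarR_linPowR {n d : ℕ} {P : MvPolynomial (Fin n) ℝ} (hP : P.IsHomogeneous d)
    (v : Fin n → ℝ) : apolarR P (linPowR v d) = MvPolynomial.eval v P := by
  classical
  have heval : MvPolynomial.eval v P =
      ∑ α ∈ P.support ∪ (linPowR v d).support, P.coeff α * ∏ i, v i ^ α i := by
    rw [MvPolynomial.eval_eq']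
    exact Finset.sum_subset Finset.subset_union_left
      (fun α _ hα => by rw [MvPolynomial.notMem_support_iff.1 hα, zero_mul])
  rw [apolarR, heval]
  refine Finset.sum_congr rfl fun α _ => ?_
  by_cases h : (∑ i, α i) = d
  · rw [coeff_linPowR, if_pos h]
    rw [mul_div_assoc, mul_div_cancel_left₀ _ (multinomialR_pos α).ne']
  · have : P.coeff α = 0 := hP.coeff_eq_zero (by rw [degree_eq_sum_univ]; exact h)
    rw [this, zero_mul, zero_mul, zero_div]

open MvPolynomial in
lemma linPowR_isHomogeneous {n d : ℕ} (v : Fin n → ℝ) :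
    (linPowR v d).IsHomogeneous d := by
  have h1 : (∑ i, MvPolynomial.C (v i) * MvPolynomial.X i : MvPolynomial (Fin n) ℝ).IsHomogeneous 1 :=
    MvPolynomial.IsHomogeneous.sum _ _ _ fun i _ => MvPolynomial.isHomogeneous_C_mul_X (v i) i
  simpa [linPowR] using h1.pow d

open MvPolynomial in
lemma apolarR_C_mul {n : ℕ} (w : ℝ) (P Q : MvPolynomial (Fin n) ℝ) :
    apolarR P (MvPolynomial.C w * Q) = w * apolarR P Q := by
  classical
  by_cases hw : w = 0
  · simp [hw, apolarR]
  have hsub : (MvPolynomial.C w * Q).support = Q.support := by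
    ext α
    simp [MvPolynomial.mem_support_iff, MvPolynomial.coeff_C_mul, hw]
  rw [apolarR, apolarR, hsub, Finset.mul_sum]
  refine Finset.sum_congr rfl fun α _ => ?_
  rw [MvPolynomial.coeff_C_mul]
  ring

lemma apolarR_comm {n : ℕ} (P Q : MvPolynomial (Fin n) ℝ) : apolarR P Q = apolarR Q P := by
  rw [apolarR, apolarR, Finset.union_comm]
  exact Finset.sum_congr rfl fun α _ => by ring

open MvPolynomial in
/-- Expansion of the squared apolar norm of a difference. -/
lemma apolarR_sub_sub {n : ℕ} (P Q : MvPolynomial (Fin n) ℝ) :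
    apolarR (P - Q) (P - Q) = apolarR P P - 2 * apolarR P Q + apolarR Q Q := by
  classical
  set S := P.support ∪ Q.support with hS
  have hPQ : (P - Q).support ∪ (P - Q).support ⊆ S := by
    rw [Finset.union_self]
    exact (MvPolynomial.support_sub _ _ _).trans le_rfl
  rw [apolarR_eq_sum hPQ,
    apolarR_eq_sum (S := S)
      (by rw [Finset.union_self]; exact Finset.subset_union_left),
    apolarR_eq_sum (S := S) le_rfl,
    apolarR_eq_sum (S := S)
      (by rw [Finset.union_self]; exact Finset.subset_union_right)]
  rw [Finset.mul_sum, ← Finset.sum_sub_distrib, ← Finset.sum_add_distrib]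
  refine Finset.sum_congr rfl fun α _ => ?_
  rw [MvPolynomial.coeff_sub]
  ring

open MvPolynomial in
/-- The main computation: the squared apolar distance from `P` to `w·(vᵗx)^d`. -/
lemma apolar_dist_eq {n d : ℕ} {P : MvPolynomial (Fin n) ℝ} (hP : P.IsHomogeneous d)
    (w : ℝ) (v : Fin n → ℝ) (hv : ∑ i, v i ^ 2 = 1) :
    apolarR (P - MvPolynomial.C w * linPowR v d) (P - MvPolynomial.C w * linPowR v d) =
      apolarR P P - 2 * w * MvPolynomial.eval v P + w ^ 2 := by
  rw [apolarR_sub_sub, apolarR_C_mul, apolarR_linPowR hP, apolarR_C_mul,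
    apolarR_comm (MvPolynomial.C w * linPowR v d) (linPowR v d),
    apolarR_C_mul, apolarR_linPowR (linPowR_isHomogeneous v) v]
  have : MvPolynomial.eval v (linPowR v d) = 1 := by
    simp only [linPowR, map_pow, map_sum, map_mul, MvPolynomial.eval_C, MvPolynomial.eval_X]
    rw [show (∑ i, v i * v i) = ∑ i, v i ^ 2 by refine Finset.sum_congr rfl fun i _ => (sq (v i)).symm,
      hv, one_pow]
  rw [this]
  ring

/-- for a real homogeneous `P` of degree `d`, with
`m = ‖P‖_{σ,ℝ} = max_{v ∈ S^{n-1}} |P(v)|` (the real spectral norm), the squared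
distance to real rank-one symmetric tensors satisfies
`dist₁(P)² = min_{(w,v) ∈ ℝ × S^{n-1}} ‖P − w (vᵗx)^d‖_d² = ‖P‖_d² − m²`, and the
minimum is attained at `w (v*ᵗ x)^d` with `v*` a maximizer of `|P(v)|` and
`w = P(v*)`. -/
theorem best_rank_one_approximation {n d : ℕ} (P : MvPolynomial (Fin n) ℝ)
    (hP : P.IsHomogeneous d) (m : ℝ)
    (hm : IsGreatest
      {y : ℝ | ∃ v : Fin n → ℝ, (∑ i, v i ^ 2 = 1) ∧ y = |MvPolynomial.eval v P|} m) :
    IsLeast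
      {y : ℝ | ∃ (w : ℝ) (v : Fin n → ℝ), (∑ i, v i ^ 2 = 1) ∧
        y = apolarR (P - MvPolynomial.C w * linPowR v d)
          (P - MvPolynomial.C w * linPowR v d)}
      (apolarR P P - m ^ 2) ∧
    ∀ v : Fin n → ℝ, (∑ i, v i ^ 2 = 1) → |MvPolynomial.eval v P| = m →
      apolarR (P - MvPolynomial.C (MvPolynomial.eval v P) * linPowR v d)
          (P - MvPolynomial.C (MvPolynomial.eval v P) * linPowR v d) =
        apolarR P P - m ^ 2 := by
  have attain : ∀ v : Fin n → ℝ, (∑ i, v i ^ 2 = 1) → |MvPolynomial.eval v P| = m →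
      apolarR (P - MvPolynomial.C (MvPolynomial.eval v P) * linPowR v d)
          (P - MvPolynomial.C (MvPolynomial.eval v P) * linPowR v d) =
        apolarR P P - m ^ 2 := by
    intro v hv hvm
    rw [apolar_dist_eq hP _ v hv]
    have h2 : (MvPolynomial.eval v P) ^ 2 = m ^ 2 := by rw [← hvm, sq_abs]
    linear_combination -h2
  refine ⟨⟨?_, ?_⟩, attain⟩
  · obtain ⟨v₀, hv₀, hv₀m⟩ := hm.1
    exact ⟨MvPolynomial.eval v₀ P, v₀, hv₀, (attain v₀ hv₀ hv₀m.symm).symm⟩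
  · rintro y ⟨w, v, hv, rfl⟩
    rw [apolar_dist_eq hP w v hv]
    have habs : |MvPolynomial.eval v P| ≤ m := hm.2 ⟨v, hv, rfl⟩
    have hsq : (MvPolynomial.eval v P) ^ 2 ≤ m ^ 2 := by
      rw [← sq_abs]
      exact pow_le_pow_left₀ (abs_nonneg _) habs 2
    nlinarith [sq_nonneg (w - MvPolynomial.eval v P)]

end
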